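/- Let μ ∈ (0,1). The channel 𝒲_μ is degradable if and only if μ ≤ 2/3; that is, there exist finitely many 2×3 complex matrices D₁,…,D_n with ∑_k D_k†D_k = I₃ such that ∑_k D_k 𝒲_μ(X) D_k† = 𝒲_μ^c(X) for every X ∈ M₃(ℂ), if and only if μ ≤ 2/3. -/

import Mathlib

open Matrix ComplexOrder

/-- Kraus operator K₀ = (1/√2)|0⟩⟨0| + √(1−μ)|1⟩⟨1| + √μ|2⟩⟨2| of 𝒲_μ. -/
noncomputable def KW0 (μ : ℝ) : Matrix (Fin 3) (Fin 3) ℂ :=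
  !![((1 / Real.sqrt 2 : ℝ) : ℂ), 0, 0;
     0, (Real.sqrt (1 - μ) : ℂ), 0;
     0, 0, (Real.sqrt μ : ℂ)]

/-- Kraus operator K₁ = √(1−μ)|0⟩⟨2| + (1/√2)|1⟩⟨0| + √μ|2⟩⟨1| of 𝒲_μ. -/
noncomputable def KW1 (μ : ℝ) : Matrix (Fin 3) (Fin 3) ℂ :=
  !![0, 0, (Real.sqrt (1 - μ) : ℂ);
     ((1 / Real.sqrt 2 : ℝ) : ℂ), 0, 0;
     0, (Real.sqrt μ : ℂ), 0]

/-- The channel 𝒲_μ = 𝒲_{1/2,μ}. -/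
noncomputable def chanW (μ : ℝ) (X : Matrix (Fin 3) (Fin 3) ℂ) : Matrix (Fin 3) (Fin 3) ℂ :=
  KW0 μ * X * (KW0 μ)ᴴ + KW1 μ * X * (KW1 μ)ᴴ

/-- Kraus operator L₀ = (1/√2)|0⟩⟨0| + √(1−μ)|1⟩⟨2| of 𝒲_μ^c. -/
noncomputable def LW0 (μ : ℝ) : Matrix (Fin 2) (Fin 3) ℂ :=
  !![((1 / Real.sqrt 2 : ℝ) : ℂ), 0, 0;
     0, 0, (Real.sqrt (1 - μ) : ℂ)]

/-- Kraus operator L₁ = (1/√2)|1⟩⟨0| + √(1−μ)|0⟩⟨1| of 𝒲_μ^c. -/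
noncomputable def LW1 (μ : ℝ) : Matrix (Fin 2) (Fin 3) ℂ :=
  !![0, (Real.sqrt (1 - μ) : ℂ), 0;
     ((1 / Real.sqrt 2 : ℝ) : ℂ), 0, 0]

/-- Kraus operator L₂ = √μ|1⟩⟨1| + √μ|0⟩⟨2| of 𝒲_μ^c. -/
noncomputable def LW2 (μ : ℝ) : Matrix (Fin 2) (Fin 3) ℂ :=
  !![0, 0, (Real.sqrt μ : ℂ);
     0, (Real.sqrt μ : ℂ), 0]

/-- The complementary channel 𝒲_μ^c. -/
noncomputable def chanWc (μ : ℝ) (X : Matrix (Fin 3) (Fin 3) ℂ) : Matrix (Fin 2) (Fin 2) ℂ :=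
  LW0 μ * X * (LW0 μ)ᴴ + LW1 μ * X * (LW1 μ)ᴴ + LW2 μ * X * (LW2 μ)ᴴ

/-!
If `D` degrades `𝒲_μ`, then `𝒲_μ^c = ∑ₖ Dₖ 𝒲_μ(·) Dₖ†` on the range of `𝒲_μ`, so positive
semidefinite outputs of `𝒲_μ` have positive semidefinite images under `𝒲_μ^c`. For
`X₀ = diag(2 - 2μ, 1, -1)` we get `𝒲_μ(X₀) = diag(0, 2 - 2μ, 0) ≥ 0` but `𝒲_μ^c(X₀)₀₀ = 2 - 3μ`,
hence `μ ≤ 2/3`.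

Conversely, composing the Kraus operators of `𝒲_μ` with the three operators `Mₖ = degraderW μ k`
gives `√μ L₀, √(1-μ) L₂, √(1-μ) L₂, √μ L₁, √(2-3μ) L₁, √(2-3μ) L₀`, so
`∑ₖ Mₖ 𝒲_μ(X) Mₖ† = (2 - 2μ) 𝒲_μ^c(X)` and `∑ₖ Mₖ† Mₖ = (2 - 2μ) I`; the entry `√(2 - 3μ)` is
where `μ ≤ 2/3` is needed. Rescaling by `(2 - 2μ)^(-1/2)` gives the degrading channel.
-/

theorem Complex.ofReal_sqrt_mul_self {t : ℝ} (ht : 0 ≤ t) : (√t : ℂ) * √t = t := by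
  rw [← Complex.ofReal_mul, Real.mul_self_sqrt ht]

theorem Complex.inv_ofReal_sqrt_two_mul_self : (√2 : ℂ)⁻¹ * (√2 : ℂ)⁻¹ = 2⁻¹ := by
  rw [← mul_inv, Complex.ofReal_sqrt_mul_self zero_le_two, Complex.ofReal_ofNat]

section KrausSandwich

variable {m n : Type*}

theorem Matrix.PosSemidef.sum_mul_mul_conjTranspose [Fintype m] [Fintype n] {ι 𝕜 : Type*}
    [Fintype ι] [RCLike 𝕜] {Y : Matrix n n 𝕜} (hY : Y.PosSemidef) (D : ι → Matrix m n 𝕜) :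
    (∑ k, D k * Y * (D k)ᴴ).PosSemidef :=
  posSemidef_sum _ fun k _ => hY.mul_mul_conjTranspose_same (D k)

theorem ofReal_sqrt_smul_mul_mul_conjTranspose [Fintype n] {t : ℝ} (ht : 0 ≤ t) (L : Matrix m n ℂ)
    (X : Matrix n n ℂ) :
    ((√t : ℂ) • L) * X * ((√t : ℂ) • L)ᴴ = (t : ℂ) • (L * X * Lᴴ) := by
  rw [conjTranspose_smul, Complex.star_def, Complex.conj_ofReal, Matrix.smul_mul, Matrix.smul_mul,
    Matrix.mul_smul, smul_smul, Complex.ofReal_sqrt_mul_self ht]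

theorem ofReal_sqrt_smul_conjTranspose_mul_smul [Fintype m] {t : ℝ} (ht : 0 ≤ t)
    (M : Matrix m n ℂ) :
    ((√t : ℂ) • M)ᴴ * ((√t : ℂ) • M) = (t : ℂ) • (Mᴴ * M) := by
  rw [conjTranspose_smul, Complex.star_def, Complex.conj_ofReal, Matrix.smul_mul, Matrix.mul_smul,
    smul_smul, Complex.ofReal_sqrt_mul_self ht]

end KrausSandwich

theorem chanW_diagonal {μ : ℝ} (h1 : μ ≤ 1) :
    chanW μ (diagonal ![((2 - 2 * μ : ℝ) : ℂ), 1, -1]) =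
      diagonal ![0, ((2 - 2 * μ : ℝ) : ℂ), 0] := by
  have ha := Complex.inv_ofReal_sqrt_two_mul_self
  have hb := Complex.ofReal_sqrt_mul_self (by linarith : 0 ≤ 1 - μ)
  push_cast at hb
  ext i j
  fin_cases i <;> fin_cases j <;>
    simp [chanW, KW0, KW1, Matrix.mul_apply, Fin.sum_univ_three, vecMul, dotProduct, diagonal_apply]
  · linear_combination (2 - 2 * (μ : ℂ)) * ha - hb
  · linear_combination (2 - 2 * (μ : ℂ)) * ha + hb

theorem chanWc_diagonal_apply_zero_zero {μ : ℝ} (h0 : 0 ≤ μ) (h1 : μ ≤ 1) :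
    chanWc μ (diagonal ![((2 - 2 * μ : ℝ) : ℂ), 1, -1]) 0 0 = ((2 - 3 * μ : ℝ) : ℂ) := by
  have hb := Complex.ofReal_sqrt_mul_self (by linarith : 0 ≤ 1 - μ)
  push_cast at hb
  simp [chanWc, LW0, LW1, LW2, Matrix.mul_apply, Fin.sum_univ_three, vecMul, dotProduct,
    diagonal_apply]
  linear_combination (2 - 2 * (μ : ℂ)) * Complex.inv_ofReal_sqrt_two_mul_self + hb -
    Complex.ofReal_sqrt_mul_self h0

theorem le_two_thirds_of_degrading {μ : ℝ} (h0 : 0 ≤ μ) (h1 : μ ≤ 1) {ι : Type*} [Fintype ι]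
    (D : ι → Matrix (Fin 2) (Fin 3) ℂ) (hD : ∀ X, ∑ k, D k * chanW μ X * (D k)ᴴ = chanWc μ X) :
    μ ≤ 2 / 3 := by
  set X₀ : Matrix (Fin 3) (Fin 3) ℂ := diagonal ![((2 - 2 * μ : ℝ) : ℂ), 1, -1]
  have hY : (chanW μ X₀).PosSemidef := by
    rw [chanW_diagonal h1]
    refine PosSemidef.diagonal fun i => ?_
    fin_cases i <;> simp
    exact_mod_cast h1
  have h00 : (0 : ℂ) ≤ ((2 - 3 * μ : ℝ) : ℂ) := by
    rw [← chanWc_diagonal_apply_zero_zero h0 h1, ← hD]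
    exact (hY.sum_mul_mul_conjTranspose D).diag_nonneg
  linarith [Complex.zero_le_real.mp h00]

theorem mul_chanW_mul_conjTranspose {m : Type*} (μ : ℝ) (D : Matrix m (Fin 3) ℂ)
    (X : Matrix (Fin 3) (Fin 3) ℂ) :
    D * chanW μ X * Dᴴ =
      (D * KW0 μ) * X * (D * KW0 μ)ᴴ + (D * KW1 μ) * X * (D * KW1 μ)ᴴ := by
  simp only [chanW, Matrix.mul_add, Matrix.add_mul, Matrix.mul_assoc, conjTranspose_mul]

noncomputable def degraderW (μ : ℝ) : Fin 3 → Matrix (Fin 2) (Fin 3) ℂ :=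
  ![!![(√μ : ℂ), 0, 0; 0, 0, (√(1 - μ) : ℂ)],
    !![0, 0, (√(1 - μ) : ℂ); 0, (√μ : ℂ), 0],
    !![0, (√(2 - 3 * μ) : ℂ), 0; (√(2 - 3 * μ) : ℂ), 0, 0]]

theorem degraderW_mul_KW (μ : ℝ) :
    degraderW μ 0 * KW0 μ = (√μ : ℂ) • LW0 μ ∧
    degraderW μ 0 * KW1 μ = (√(1 - μ) : ℂ) • LW2 μ ∧
    degraderW μ 1 * KW0 μ = (√(1 - μ) : ℂ) • LW2 μ ∧
    degraderW μ 1 * KW1 μ = (√μ : ℂ) • LW1 μ ∧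
    degraderW μ 2 * KW0 μ = (√(2 - 3 * μ) : ℂ) • LW1 μ ∧
    degraderW μ 2 * KW1 μ = (√(2 - 3 * μ) : ℂ) • LW0 μ := by
  refine ⟨?_, ?_, ?_, ?_, ?_, ?_⟩ <;> ext i j <;> fin_cases i <;> fin_cases j <;>
    simp [degraderW, KW0, KW1, LW0, LW1, LW2, Matrix.mul_apply, Fin.sum_univ_three, mul_comm]

theorem sum_degraderW_conjTranspose_mul {μ : ℝ} (h0 : 0 ≤ μ) (h23 : μ ≤ 2 / 3) :
    ∑ k, (degraderW μ k)ᴴ * degraderW μ k = ((2 - 2 * μ : ℝ) : ℂ) • 1 := by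
  ext i j
  rw [Fin.sum_univ_three]
  fin_cases i <;> fin_cases j <;>
    simp [degraderW, Matrix.mul_apply, Complex.ofReal_sqrt_mul_self h0,
      Complex.ofReal_sqrt_mul_self (by linarith : 0 ≤ 1 - μ),
      Complex.ofReal_sqrt_mul_self (by linarith : 0 ≤ 2 - 3 * μ)] <;> ring

theorem sum_degraderW_mul_chanW_mul {μ : ℝ} (h0 : 0 ≤ μ) (h23 : μ ≤ 2 / 3)
    (X : Matrix (Fin 3) (Fin 3) ℂ) :
    ∑ k, degraderW μ k * chanW μ X * (degraderW μ k)ᴴ = ((2 - 2 * μ : ℝ) : ℂ) • chanWc μ X := by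
  obtain ⟨h00, h01, h10, h11, h20, h21⟩ := degraderW_mul_KW μ
  simp only [Fin.sum_univ_three, mul_chanW_mul_conjTranspose, h00, h01, h10, h11, h20, h21,
    ofReal_sqrt_smul_mul_mul_conjTranspose h0,
    ofReal_sqrt_smul_mul_mul_conjTranspose (by linarith : 0 ≤ 1 - μ),
    ofReal_sqrt_smul_mul_mul_conjTranspose (by linarith : 0 ≤ 2 - 3 * μ), chanWc]
  push_cast
  module

theorem exists_degrading_of_le_two_thirds {μ : ℝ} (h0 : 0 ≤ μ) (h23 : μ ≤ 2 / 3) :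
    ∃ (n : ℕ) (D : Fin n → Matrix (Fin 2) (Fin 3) ℂ),
      ∑ k, (D k)ᴴ * D k = 1 ∧ ∀ X, ∑ k, D k * chanW μ X * (D k)ᴴ = chanWc μ X := by
  have hc : 0 ≤ (2 - 2 * μ)⁻¹ := inv_nonneg.mpr (by linarith)
  have hnorm : (((2 - 2 * μ)⁻¹ : ℝ) : ℂ) * ((2 - 2 * μ : ℝ) : ℂ) = 1 := by
    rw [← Complex.ofReal_mul, inv_mul_cancel₀ (by linarith), Complex.ofReal_one]
  refine ⟨3, fun k => (√((2 - 2 * μ)⁻¹) : ℂ) • degraderW μ k, ?_, fun X => ?_⟩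
  · simp only [ofReal_sqrt_smul_conjTranspose_mul_smul hc, ← Finset.smul_sum,
      sum_degraderW_conjTranspose_mul h0 h23, smul_smul, hnorm, one_smul]
  · simp only [ofReal_sqrt_smul_mul_mul_conjTranspose hc, ← Finset.smul_sum,
      sum_degraderW_mul_chanW_mul h0 h23, smul_smul, hnorm, one_smul]

/-- The channel 𝒲_μ is degradable if and only if μ ≤ 2/3. -/
theorem stmt19 (μ : ℝ) (hμ : μ ∈ Set.Ioo (0 : ℝ) 1) :
    (∃ (n : ℕ) (D : Fin n → Matrix (Fin 2) (Fin 3) ℂ),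
      (∑ k, (D k)ᴴ * D k) = (1 : Matrix (Fin 3) (Fin 3) ℂ) ∧
      ∀ X : Matrix (Fin 3) (Fin 3) ℂ,
        (∑ k, D k * chanW μ X * (D k)ᴴ) = chanWc μ X) ↔ μ ≤ 2/3 := by
  obtain ⟨h0, h1⟩ := hμ
  constructor
  · rintro ⟨n, D, -, hD⟩
    exact le_two_thirds_of_degrading h0.le h1.le D hD
  · exact exists_degrading_of_le_two_thirds h0.le
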